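/- arXiv:1609.05220 — 3 statements merged into one kernel-verified Lean document; each statement's English description precedes it below -/
import Mathlib

section
/- The geodesics of the Jemisphere model (the open upper unit hemisphere in ℝ³ with metric (dw₁²+dw₂²+dw₃²)/w₃²) are precisely the intersections of the hemisphere with vertical planes A w₁ + B w₂ = C (with (A,B) ≠ (0,0)). -/
/-- The open upper unit hemisphere in `ℝ³`. -/
def upperHemi : Set (ℝ × ℝ × ℝ) := {w | w.1 ^ 2 + w.2.1 ^ 2 + w.2.2 ^ 2 = 1 ∧ 0 < w.2.2}

/-- Euclidean speed of a curve in `ℝ³`. -/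
noncomputable def speed (γ : ℝ → ℝ × ℝ × ℝ) (t : ℝ) : ℝ :=
  Real.sqrt ((deriv γ t).1 ^ 2 + (deriv γ t).2.1 ^ 2 + (deriv γ t).2.2 ^ 2)

/-- Length of a curve segment for the Jemisphere metric `|dw|²/w₃²`. -/
noncomputable def jemLength (γ : ℝ → ℝ × ℝ × ℝ) (a b : ℝ) : ℝ :=
  ∫ t in a..b, speed γ t / (γ t).2.2

/-- Induced distance on the Jemisphere: infimum of lengths of C¹ paths in the
hemisphere joining the two points. -/
noncomputable def jemDist (x y : ℝ × ℝ × ℝ) : ℝ :=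
  sInf {L | ∃ γ : ℝ → ℝ × ℝ × ℝ, ContDiff ℝ 1 γ ∧ γ 0 = x ∧ γ 1 = y ∧
    (∀ t ∈ Set.Icc (0 : ℝ) 1, γ t ∈ upperHemi) ∧ L = jemLength γ 0 1}

/-- A curve is an (unparametrized) geodesic iff it is locally length minimizing. -/
def IsJemGeodesic (γ : ℝ → ℝ × ℝ × ℝ) : Prop :=
  ∀ t : ℝ, ∃ ε > 0, ∀ s₁ s₂ : ℝ, |s₁ - t| < ε → |s₂ - t| < ε → s₁ ≤ s₂ →
    jemDist (γ s₁) (γ s₂) = jemLength γ s₁ s₂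

namespace JemAux

/-- component derivative helpers -/
lemma hasDerivAt_c1 {γ : ℝ → ℝ × ℝ × ℝ} {V : ℝ × ℝ × ℝ} {t : ℝ} (h : HasDerivAt γ V t) :
    HasDerivAt (fun s => (γ s).1) V.1 t := by
  have := ((ContinuousLinearMap.fst ℝ ℝ (ℝ × ℝ)).hasFDerivAt (x := γ t)).comp_hasDerivAt t h
  simpa [Function.comp_def] using this

lemma hasDerivAt_c2 {γ : ℝ → ℝ × ℝ × ℝ} {V : ℝ × ℝ × ℝ} {t : ℝ} (h : HasDerivAt γ V t) :
    HasDerivAt (fun s => (γ s).2.1) V.2.1 t := by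
  have h2 := ((ContinuousLinearMap.snd ℝ ℝ (ℝ × ℝ)).hasFDerivAt (x := γ t)).comp_hasDerivAt t h
  have := ((ContinuousLinearMap.fst ℝ ℝ ℝ).hasFDerivAt (x := (γ t).2)).comp_hasDerivAt t h2
  simpa [Function.comp_def] using this

lemma hasDerivAt_c3 {γ : ℝ → ℝ × ℝ × ℝ} {V : ℝ × ℝ × ℝ} {t : ℝ} (h : HasDerivAt γ V t) :
    HasDerivAt (fun s => (γ s).2.2) V.2.2 t := by
  have h2 := ((ContinuousLinearMap.snd ℝ ℝ (ℝ × ℝ)).hasFDerivAt (x := γ t)).comp_hasDerivAt t h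
  have := ((ContinuousLinearMap.snd ℝ ℝ ℝ).hasFDerivAt (x := (γ t).2)).comp_hasDerivAt t h2
  simpa [Function.comp_def] using this

/-- calibration potential adapted to boundary point (a,b,0) -/
noncomputable def Gab (a b : ℝ) (w : ℝ × ℝ × ℝ) : ℝ :=
  Real.log (1 - (a * w.1 + b * w.2.1)) - Real.log w.2.2

/-- derivative of Gab along a curve -/
noncomputable def gder (a b : ℝ) (σ : ℝ → ℝ × ℝ × ℝ) (t : ℝ) : ℝ :=
  (-(a * (deriv σ t).1 + b * (deriv σ t).2.1)) / (1 - (a * (σ t).1 + b * (σ t).2.1))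
    - (deriv σ t).2.2 / (σ t).2.2

lemma hasDerivAt_Gab {a b : ℝ} {σ : ℝ → ℝ × ℝ × ℝ} {t : ℝ}
    (hσ : HasDerivAt σ (deriv σ t) t)
    (h1 : 1 - (a * (σ t).1 + b * (σ t).2.1) ≠ 0) (h2 : (σ t).2.2 ≠ 0) :
    HasDerivAt (fun s => Gab a b (σ s)) (gder a b σ t) t := by
  have hx := hasDerivAt_c1 hσ
  have hy := hasDerivAt_c2 hσ
  have hz := hasDerivAt_c3 hσ
  have hlin : HasDerivAt (fun s => 1 - (a * (σ s).1 + b * (σ s).2.1))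
      (-(a * (deriv σ t).1 + b * (deriv σ t).2.1)) t := by
    have := ((hx.const_mul a).add (hy.const_mul b)).const_sub 1
    simpa using this
  have hl1 := hlin.log h1
  have hl2 := hz.log h2
  simpa [Gab, gder, Pi.sub_def] using hl1.sub hl2

/-- Cauchy-Schwarz calibration inequality (squared form). -/
lemma calib_sq {a b x y z u v r : ℝ} (hsph : x^2 + y^2 + z^2 = 1) (hab : a^2 + b^2 = 1)
    (horth : x*u + y*v + z*r = 0) :
    (z*(a*u + b*v) + r*(1 - (a*x + b*y)))^2 ≤ (1 - (a*x + b*y))^2 * (u^2 + v^2 + r^2) := by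
  set E1 := z*(x - a) with hE1
  set E2 := z*(y - b) with hE2
  set E3 := (a*x + b*y) - (x^2 + y^2) with hE3
  have hnorm : E1^2 + E2^2 + E3^2 = (1 - (a*x + b*y))^2 := by
    rw [hE1, hE2, hE3]
    linear_combination (x^2+y^2+a^2+b^2-2*(a*x+b*y)) * hsph + (1-x^2-y^2) * hab
  have hinner : E1*u + E2*v + E3*r = -(z*(a*u + b*v) + r*(1 - (a*x + b*y))) := by
    rw [hE1, hE2, hE3]
    linear_combination z*horth - r*hsph
  have hCS : (E1*u + E2*v + E3*r)^2 ≤ (E1^2 + E2^2 + E3^2) * (u^2 + v^2 + r^2) := by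
    nlinarith [sq_nonneg (E1*v - E2*u), sq_nonneg (E1*r - E3*u), sq_nonneg (E2*r - E3*v)]
  calc (z*(a*u + b*v) + r*(1 - (a*x + b*y)))^2 = (E1*u + E2*v + E3*r)^2 := by
        rw [hinner]; ring
    _ ≤ (E1^2 + E2^2 + E3^2) * (u^2 + v^2 + r^2) := hCS
    _ = (1 - (a*x + b*y))^2 * (u^2 + v^2 + r^2) := by rw [hnorm]


lemma speed_cont {σ : ℝ → ℝ × ℝ × ℝ} (hσ : ContDiff ℝ 1 σ) : Continuous (speed σ) := by
  have cd : Continuous (deriv σ) := hσ.continuous_deriv le_rfl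
  exact Real.continuous_sqrt.comp
    (((cd.fst.pow 2).add (cd.snd.fst.pow 2)).add (cd.snd.snd.pow 2))

lemma speed_nonneg (σ : ℝ → ℝ × ℝ × ℝ) (t : ℝ) : 0 ≤ speed σ t := Real.sqrt_nonneg _

lemma one_sub_s_pos {a b : ℝ} (hab : a^2 + b^2 = 1) {w : ℝ × ℝ × ℝ} (hw : w ∈ upperHemi) :
    0 < 1 - (a * w.1 + b * w.2.1) := by
  obtain ⟨hsph, hz⟩ := hw
  nlinarith [sq_nonneg (a - w.1), sq_nonneg (b - w.2.1), sq_nonneg w.2.2]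

lemma orth_interior {σ : ℝ → ℝ × ℝ × ℝ} (hσ : ContDiff ℝ 1 σ) {I : Set ℝ} (hI : IsOpen I)
    (hm : ∀ t ∈ I, (σ t).1^2 + (σ t).2.1^2 + (σ t).2.2^2 = 1) {t : ℝ} (ht : t ∈ I) :
    (σ t).1*(deriv σ t).1 + (σ t).2.1*(deriv σ t).2.1 + (σ t).2.2*(deriv σ t).2.2 = 0 := by
  have hd := (hσ.differentiable one_ne_zero t).hasDerivAt
  have h1 : HasDerivAt (fun s => (σ s).1^2 + (σ s).2.1^2 + (σ s).2.2^2)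
      (2*((σ t).1*(deriv σ t).1 + (σ t).2.1*(deriv σ t).2.1 + (σ t).2.2*(deriv σ t).2.2)) t := by
    have := (((hasDerivAt_c1 hd).pow 2).add ((hasDerivAt_c2 hd).pow 2)).add
      ((hasDerivAt_c3 hd).pow 2)
    exact this.congr_deriv (by norm_num; ring)
  have heq : (fun s => (σ s).1^2 + (σ s).2.1^2 + (σ s).2.2^2) =ᶠ[nhds t] (fun _ => (1:ℝ)) :=
    Filter.eventuallyEq_of_mem (hI.mem_nhds ht) (fun s hs => hm s hs)
  have h0 : HasDerivAt (fun s => (σ s).1^2 + (σ s).2.1^2 + (σ s).2.2^2) 0 t :=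
    (hasDerivAt_const t (1:ℝ)).congr_of_eventuallyEq heq
  have := h1.unique h0
  linarith

/-- pointwise calibration bound -/
lemma gder_le {a b : ℝ} (hab : a^2 + b^2 = 1) {σ : ℝ → ℝ × ℝ × ℝ} {t : ℝ}
    (hw : σ t ∈ upperHemi)
    (horth : (σ t).1*(deriv σ t).1 + (σ t).2.1*(deriv σ t).2.1
      + (σ t).2.2*(deriv σ t).2.2 = 0) :
    |gder a b σ t| ≤ speed σ t / (σ t).2.2 := by
  obtain ⟨hsph, hz⟩ := hw
  set x := (σ t).1 with hxd; set y := (σ t).2.1 with hyd; set z := (σ t).2.2 with hzd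
  set u := (deriv σ t).1 with hud; set v := (deriv σ t).2.1 with hvd
  set r := (deriv σ t).2.2 with hrd
  have hs : 0 < 1 - (a*x + b*y) := one_sub_s_pos hab ⟨hsph, hz⟩
  have hkey : (z*(a*u + b*v) + r*(1 - (a*x + b*y)))^2
      ≤ (1 - (a*x + b*y))^2 * (u^2 + v^2 + r^2) := by
    refine calib_sq hsph hab ?_
    linarith [horth]
  have hg : gder a b σ t = -((z*(a*u + b*v) + r*(1 - (a*x + b*y))) / ((1 - (a*x+b*y)) * z)) := by
    simp only [gder, ← hxd, ← hyd, ← hzd, ← hud, ← hvd, ← hrd]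
    field_simp
    ring
  have hNle : |z*(a*u + b*v) + r*(1 - (a*x + b*y))|
      ≤ (1 - (a*x+b*y)) * Real.sqrt (u^2 + v^2 + r^2) := by
    have h1 := Real.sqrt_le_sqrt hkey
    rw [Real.sqrt_sq_eq_abs] at h1
    rwa [Real.sqrt_mul (sq_nonneg _), Real.sqrt_sq hs.le] at h1
  have h2 : |z*(a*u+b*v) + r*(1-(a*x+b*y))| / ((1-(a*x+b*y))*z)
      ≤ ((1-(a*x+b*y)) * Real.sqrt (u^2+v^2+r^2)) / ((1-(a*x+b*y))*z) :=
    (div_le_div_iff_of_pos_right (mul_pos hs hz)).mpr hNle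
  rw [hg, abs_neg, abs_div, abs_of_pos (mul_pos hs hz)]
  calc |z*(a*u+b*v) + r*(1-(a*x+b*y))| / ((1-(a*x+b*y))*z)
      ≤ ((1-(a*x+b*y)) * Real.sqrt (u^2+v^2+r^2)) / ((1-(a*x+b*y))*z) := h2
    _ = Real.sqrt (u^2+v^2+r^2) / z := mul_div_mul_left _ _ hs.ne'
    _ = speed σ t / z := rfl


lemma gder_contOn {a b : ℝ} {σ : ℝ → ℝ × ℝ × ℝ} (hσ : ContDiff ℝ 1 σ) {S : Set ℝ}
    (hz : ∀ t ∈ S, 0 < (σ t).2.2) (hs : ∀ t ∈ S, 0 < 1 - (a*(σ t).1 + b*(σ t).2.1)) :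
    ContinuousOn (gder a b σ) S := by
  have cd : Continuous (deriv σ) := hσ.continuous_deriv le_rfl
  have cσ : Continuous σ := hσ.continuous
  apply ContinuousOn.sub
  · apply ContinuousOn.div
    · exact ((((continuous_const.mul cd.fst)).add ((continuous_const.mul cd.snd.fst))).neg).continuousOn
    · exact ((continuous_const.sub (((continuous_const.mul cσ.fst)).add ((continuous_const.mul cσ.snd.fst))))).continuousOn
    · exact fun t ht => (hs t ht).ne'
  · exact ContinuousOn.div cd.snd.snd.continuousOn cσ.snd.snd.continuousOn
      (fun t ht => (hz t ht).ne')

lemma speedz_contOn {σ : ℝ → ℝ × ℝ × ℝ} (hσ : ContDiff ℝ 1 σ) {S : Set ℝ}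
    (hz : ∀ t ∈ S, 0 < (σ t).2.2) :
    ContinuousOn (fun t => speed σ t / (σ t).2.2) S :=
  ContinuousOn.div (speed_cont hσ).continuousOn hσ.continuous.snd.snd.continuousOn
    (fun t ht => (hz t ht).ne')

lemma jemLength_nonneg {σ : ℝ → ℝ × ℝ × ℝ} {s₁ s₂ : ℝ} (h12 : s₁ ≤ s₂)
    (hz : ∀ t ∈ Set.Icc s₁ s₂, 0 < (σ t).2.2) : 0 ≤ jemLength σ s₁ s₂ :=
  intervalIntegral.integral_nonneg h12
    (fun u hu => div_nonneg (speed_nonneg σ u) (hz u hu).le)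

/-- FTC for the calibration potential along a C¹ curve. -/
lemma ftc_Gab {a b : ℝ} {σ : ℝ → ℝ × ℝ × ℝ} (hσ : ContDiff ℝ 1 σ) {s₁ s₂ : ℝ} (h12 : s₁ ≤ s₂)
    (hz : ∀ t ∈ Set.Icc s₁ s₂, 0 < (σ t).2.2)
    (hs : ∀ t ∈ Set.Icc s₁ s₂, 0 < 1 - (a*(σ t).1 + b*(σ t).2.1)) :
    ∫ t in s₁..s₂, gder a b σ t = Gab a b (σ s₂) - Gab a b (σ s₁) := by
  have huicc : Set.uIcc s₁ s₂ = Set.Icc s₁ s₂ := Set.uIcc_of_le h12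
  apply intervalIntegral.integral_eq_sub_of_hasDerivAt
  · intro t ht
    rw [huicc] at ht
    exact hasDerivAt_Gab (hσ.differentiable one_ne_zero t).hasDerivAt (hs t ht).ne' (hz t ht).ne'
  · apply ContinuousOn.intervalIntegrable
    rw [huicc]
    exact gder_contOn hσ hz hs

/-- Any admissible competitor has length at least the potential difference. -/
lemma competitor_lb {a b : ℝ} (hab : a^2 + b^2 = 1) {σ : ℝ → ℝ × ℝ × ℝ}
    (hσ : ContDiff ℝ 1 σ) (hm : ∀ t ∈ Set.Icc (0:ℝ) 1, σ t ∈ upperHemi) :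
    |Gab a b (σ 1) - Gab a b (σ 0)| ≤ jemLength σ 0 1 := by
  have hz : ∀ t ∈ Set.Icc (0:ℝ) 1, 0 < (σ t).2.2 := fun t ht => (hm t ht).2
  have hs : ∀ t ∈ Set.Icc (0:ℝ) 1, 0 < 1 - (a*(σ t).1 + b*(σ t).2.1) :=
    fun t ht => one_sub_s_pos hab (hm t ht)
  have hFTC := ftc_Gab hσ zero_le_one hz hs
  have hgint : IntervalIntegrable (gder a b σ) MeasureTheory.volume 0 1 := by
    apply ContinuousOn.intervalIntegrable
    rw [Set.uIcc_of_le zero_le_one]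
    exact gder_contOn hσ hz hs
  have hsint : IntervalIntegrable (fun t => speed σ t / (σ t).2.2) MeasureTheory.volume 0 1 := by
    apply ContinuousOn.intervalIntegrable
    rw [Set.uIcc_of_le zero_le_one]
    exact speedz_contOn hσ hz
  have hIoo : ∀ t ∈ Set.Ioo (0:ℝ) 1, |gder a b σ t| ≤ speed σ t / (σ t).2.2 := by
    intro t ht
    have horth := orth_interior hσ isOpen_Ioo
      (fun u hu => (hm u (Set.Ioo_subset_Icc_self hu)).1) ht
    exact gder_le hab (hm t (Set.Ioo_subset_Icc_self ht)) horth
  have hae : (fun t => |gder a b σ t|)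
      ≤ᵐ[MeasureTheory.volume.restrict (Set.Icc (0:ℝ) 1)] (fun t => speed σ t / (σ t).2.2) := by
    rw [← MeasureTheory.Measure.restrict_congr_set MeasureTheory.Ioo_ae_eq_Icc]
    filter_upwards [MeasureTheory.ae_restrict_mem measurableSet_Ioo] with t ht
    exact hIoo t ht
  calc |Gab a b (σ 1) - Gab a b (σ 0)| = |∫ t in (0:ℝ)..1, gder a b σ t| := by rw [hFTC]
    _ ≤ ∫ t in (0:ℝ)..1, |gder a b σ t| :=
        intervalIntegral.abs_integral_le_integral_abs zero_le_one
    _ ≤ ∫ t in (0:ℝ)..1, speed σ t / (σ t).2.2 :=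
        intervalIntegral.integral_mono_ae_restrict zero_le_one hgint.abs hsint hae
    _ = jemLength σ 0 1 := rfl


def pathSet (x y : ℝ × ℝ × ℝ) : Set ℝ :=
  {L | ∃ γ : ℝ → ℝ × ℝ × ℝ, ContDiff ℝ 1 γ ∧ γ 0 = x ∧ γ 1 = y ∧
    (∀ t ∈ Set.Icc (0 : ℝ) 1, γ t ∈ upperHemi) ∧ L = jemLength γ 0 1}

lemma jemDist_eq (x y : ℝ × ℝ × ℝ) : jemDist x y = sInf (pathSet x y) := rfl

lemma pathSet_nonneg {x y : ℝ × ℝ × ℝ} {L : ℝ} (hL : L ∈ pathSet x y) : 0 ≤ L := by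
  obtain ⟨σ, hσ, h0, h1, hm, rfl⟩ := hL
  exact jemLength_nonneg zero_le_one (fun t ht => (hm t ht).2)

lemma pathSet_bddBelow (x y : ℝ × ℝ × ℝ) : BddBelow (pathSet x y) :=
  ⟨0, fun L hL => pathSet_nonneg hL⟩

lemma jemDist_le {x y : ℝ × ℝ × ℝ} {L : ℝ} (hL : L ∈ pathSet x y) : jemDist x y ≤ L :=
  csInf_le (pathSet_bddBelow x y) hL

lemma le_jemDist {x y : ℝ × ℝ × ℝ} {a b : ℝ} (hab : a^2 + b^2 = 1)
    (hne : (pathSet x y).Nonempty) : |Gab a b y - Gab a b x| ≤ jemDist x y := by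
  apply le_csInf hne
  rintro L ⟨σ, hσ, rfl, rfl, hm, rfl⟩
  exact competitor_lb hab hσ hm

/-- reparametrization of a segment of γ to [0,1] -/
lemma reparam_mem {γ : ℝ → ℝ × ℝ × ℝ} (hγ : ContDiff ℝ 1 γ)
    (hmem : ∀ t, γ t ∈ upperHemi) {s₁ s₂ : ℝ} (h12 : s₁ ≤ s₂) :
    jemLength γ s₁ s₂ ∈ pathSet (γ s₁) (γ s₂) := by
  set d := s₂ - s₁ with hd
  have hd0 : 0 ≤ d := by simp [hd]; linarith
  refine ⟨fun t => γ (s₁ + d * t), ?_, by norm_num, ?_, fun t _ => hmem _, ?_⟩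
  · apply hγ.comp
    exact contDiff_const.add (contDiff_const.mul contDiff_id)
  · show γ (s₁ + d * 1) = γ s₂
    norm_num [hd]
  · -- length equality
    set σ : ℝ → ℝ × ℝ × ℝ := fun t => γ (s₁ + d * t) with hσdef
    have hder : ∀ t : ℝ, HasDerivAt σ (d • deriv γ (s₁ + d * t)) t := by
      intro t
      have hinner : HasDerivAt (fun t : ℝ => s₁ + d * t) d t := by
        simpa using ((hasDerivAt_id t).const_mul d).const_add s₁
      exact ((hγ.differentiable one_ne_zero _).hasDerivAt).scomp t hinner
    have hspeed : ∀ t : ℝ, speed σ t / (σ t).2.2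
        = d * (speed γ (s₁ + d * t) / (γ (s₁ + d * t)).2.2) := by
      intro t
      have hdv : deriv σ t = d • deriv γ (s₁ + d * t) := (hder t).deriv
      have : speed σ t = d * speed γ (s₁ + d * t) := by
        simp only [speed, hdv, Prod.smul_fst, Prod.smul_snd, smul_eq_mul]
        rw [show (d * (deriv γ (s₁ + d*t)).1)^2 + (d * (deriv γ (s₁ + d*t)).2.1)^2
            + (d * (deriv γ (s₁ + d*t)).2.2)^2
            = d^2 * ((deriv γ (s₁ + d*t)).1^2 + (deriv γ (s₁ + d*t)).2.1^2
              + (deriv γ (s₁ + d*t)).2.2^2) by ring]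
        rw [Real.sqrt_mul (sq_nonneg d), Real.sqrt_sq hd0]
      rw [this, hσdef]
      ring
    show jemLength γ s₁ s₂ = jemLength σ 0 1
    have : jemLength σ 0 1 = ∫ t in (0:ℝ)..1, d * (speed γ (s₁ + d * t) / (γ (s₁ + d * t)).2.2) := by
      simp only [jemLength]
      congr 1
      ext t
      exact hspeed t
    rw [this]
    rw [intervalIntegral.integral_const_mul]
    have := intervalIntegral.smul_integral_comp_add_mul
      (f := fun x => speed γ x / (γ x).2.2) (a := (0:ℝ)) (b := (1:ℝ)) d s₁
    rw [smul_eq_mul] at this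
    rw [this]
    norm_num [jemLength, hd]


/-- Equality case: on the vertical plane, Cauchy-Schwarz is an equality. -/
lemma calib_eq {A B C ρ a b x y z u v r : ℝ} (hAB : A^2 + B^2 = 1) (hρ : ρ^2 = 1 - C^2)
    (ha : a = A*C - B*ρ) (hb : b = B*C + A*ρ) (hsph : x^2 + y^2 + z^2 = 1)
    (hpl : A*x + B*y = C) (hor : x*u + y*v + z*r = 0) (hto : A*u + B*v = 0) :
    (z*(a*u + b*v) + r*(1 - (a*x + b*y)))^2 = (1 - (a*x + b*y))^2 * (u^2 + v^2 + r^2) := by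
  obtain ⟨τ, hτ⟩ : ∃ τ, τ = B*u - A*v := ⟨_, rfl⟩
  obtain ⟨ξ, hξ⟩ : ∃ ξ, ξ = B*x - A*y := ⟨_, rfl⟩
  have hu : u = B*τ := by linear_combination A*hto - u*hAB - B*hτ
  have hv : v = -(A*τ) := by linear_combination B*hto - v*hAB + A*hτ
  have hx : x = C*A + B*ξ := by linear_combination A*hpl - x*hAB - B*hξ
  have hy : y = C*B - A*ξ := by linear_combination B*hpl - y*hAB + A*hξ
  have hq : x^2 + y^2 = C^2 + ξ^2 := by
    linear_combination (x + C*A + B*ξ)*hx + (y + C*B - A*ξ)*hy + (C^2 + ξ^2)*hAB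
  have hz2 : z^2 = ρ^2 - ξ^2 := by linear_combination hsph - hq - hρ
  rw [hu, hv, hx, hy] at hor
  have hτξ : τ*ξ + z*r = 0 := by linear_combination hor - τ*ξ*hAB
  have hau : a*u + b*v = -(ρ*τ) := by
    rw [ha, hb, hu, hv]; linear_combination (-(ρ*τ))*hAB
  have hsx : 1 - (a*x + b*y) = ρ*(ρ+ξ) := by
    rw [ha, hb, hx, hy]; linear_combination -hρ + (ρ*ξ - C^2)*hAB
  have hτ2 : u^2 + v^2 = τ^2 := by rw [hu, hv]; linear_combination τ^2*hAB
  rw [hau, hsx, hτ2]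
  linear_combination (ρ^2*τ^2)*hz2 - (2*ρ^2*τ*(ρ+ξ))*hτξ

/-- pointwise equality of calibration along a plane curve -/
lemma gder_eq {A B C ρ a b : ℝ} (hAB : A^2 + B^2 = 1) (hρ : ρ^2 = 1 - C^2)
    (ha : a = A*C - B*ρ) (hb : b = B*C + A*ρ) (hab : a^2 + b^2 = 1)
    {σ : ℝ → ℝ × ℝ × ℝ} {t : ℝ} (hw : σ t ∈ upperHemi)
    (horth : (σ t).1*(deriv σ t).1 + (σ t).2.1*(deriv σ t).2.1
      + (σ t).2.2*(deriv σ t).2.2 = 0)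
    (hpl : A*(σ t).1 + B*(σ t).2.1 = C)
    (hto : A*(deriv σ t).1 + B*(deriv σ t).2.1 = 0) :
    |gder a b σ t| = speed σ t / (σ t).2.2 := by
  obtain ⟨hsph, hz⟩ := hw
  set x := (σ t).1 with hxd; set y := (σ t).2.1 with hyd; set z := (σ t).2.2 with hzd
  set u := (deriv σ t).1 with hud; set v := (deriv σ t).2.1 with hvd
  set r := (deriv σ t).2.2 with hrd
  have hs : 0 < 1 - (a*x + b*y) := one_sub_s_pos hab ⟨hsph, hz⟩
  have hkey : (z*(a*u + b*v) + r*(1 - (a*x + b*y)))^2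
      = (1 - (a*x + b*y))^2 * (u^2 + v^2 + r^2) :=
    calib_eq hAB hρ ha hb hsph hpl (by linarith [horth]) hto
  have hg : gder a b σ t = -((z*(a*u + b*v) + r*(1 - (a*x + b*y))) / ((1 - (a*x+b*y)) * z)) := by
    simp only [gder, ← hxd, ← hyd, ← hzd, ← hud, ← hvd, ← hrd]
    field_simp
    ring
  have hNeq : |z*(a*u + b*v) + r*(1 - (a*x + b*y))|
      = (1 - (a*x+b*y)) * Real.sqrt (u^2 + v^2 + r^2) := by
    rw [← Real.sqrt_sq_eq_abs, hkey, Real.sqrt_mul (sq_nonneg _), Real.sqrt_sq hs.le]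
  rw [hg, abs_neg, abs_div, abs_of_pos (mul_pos hs hz), hNeq]
  rw [mul_div_mul_left _ _ hs.ne']
  rfl

/-- length formula for a calibrated curve -/
lemma length_eq_of_calibrated {a b : ℝ} {γ : ℝ → ℝ × ℝ × ℝ} (hγ : ContDiff ℝ 1 γ)
    {s₁ s₂ : ℝ} (h12 : s₁ ≤ s₂)
    (hz : ∀ t ∈ Set.Icc s₁ s₂, 0 < (γ t).2.2)
    (hs : ∀ t ∈ Set.Icc s₁ s₂, 0 < 1 - (a*(γ t).1 + b*(γ t).2.1))
    (heq : ∀ t ∈ Set.Icc s₁ s₂, |gder a b γ t| = speed γ t / (γ t).2.2)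
    (hpos : ∀ t ∈ Set.Icc s₁ s₂, 0 < speed γ t) :
    jemLength γ s₁ s₂ = |Gab a b (γ s₂) - Gab a b (γ s₁)| := by
  have hcont : ContinuousOn (gder a b γ) (Set.Icc s₁ s₂) :=
    gder_contOn hγ hz hs
  have hne : ∀ t ∈ Set.Icc s₁ s₂, gder a b γ t ≠ 0 := by
    intro t ht h0
    have h1 := heq t ht
    rw [h0, abs_zero] at h1
    have h2 := div_pos (hpos t ht) (hz t ht)
    rw [← h1] at h2
    exact lt_irrefl 0 h2
  have hftc := ftc_Gab hγ h12 hz hs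
  rcases lt_or_gt_of_ne (hne s₁ ⟨le_rfl, h12⟩) with hneg1 | hpos1
  · -- gder < 0 throughout
    have hsign : ∀ t ∈ Set.Icc s₁ s₂, gder a b γ t < 0 := by
      intro t ht
      rcases lt_or_gt_of_ne (hne t ht) with h | h
      · exact h
      · exfalso
        have hsub : Set.Icc s₁ t ⊆ Set.Icc s₁ s₂ := Set.Icc_subset_Icc le_rfl ht.2
        have h0mem : (0:ℝ) ∈ Set.Icc (gder a b γ s₁) (gder a b γ t) := ⟨hneg1.le, h.le⟩
        obtain ⟨c, hc, hc0⟩ := intermediate_value_Icc ht.1 (hcont.mono hsub) h0mem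
        exact hne c (hsub hc) hc0
    have heqon : Set.EqOn (fun t => speed γ t / (γ t).2.2)
        (fun t => -gder a b γ t) (Set.uIcc s₁ s₂) := by
      rw [Set.uIcc_of_le h12]
      intro t ht
      simp only
      rw [← heq t ht, abs_of_neg (hsign t ht)]
    have hneg : Gab a b (γ s₂) - Gab a b (γ s₁) ≤ 0 := by
      rw [← hftc]
      have h0 : (0:ℝ) = ∫ t in s₁..s₂, (0:ℝ) := by simp
      rw [h0]
      apply intervalIntegral.integral_mono_on h12
      · apply ContinuousOn.intervalIntegrable; rw [Set.uIcc_of_le h12]; exact hcont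
      · apply ContinuousOn.intervalIntegrable; rw [Set.uIcc_of_le h12]
        exact continuousOn_const
      · exact fun u hu => (hsign u hu).le
    calc jemLength γ s₁ s₂ = ∫ t in s₁..s₂, -gder a b γ t :=
          intervalIntegral.integral_congr heqon
      _ = -(Gab a b (γ s₂) - Gab a b (γ s₁)) := by rw [intervalIntegral.integral_neg, hftc]
      _ = |Gab a b (γ s₂) - Gab a b (γ s₁)| := (abs_of_nonpos hneg).symm
  · -- gder > 0 throughout
    have hsign : ∀ t ∈ Set.Icc s₁ s₂, 0 < gder a b γ t := by
      intro t ht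
      rcases lt_or_gt_of_ne (hne t ht) with h | h
      · exfalso
        have hsub : Set.Icc s₁ t ⊆ Set.Icc s₁ s₂ := Set.Icc_subset_Icc le_rfl ht.2
        have h0mem : (0:ℝ) ∈ Set.Icc (gder a b γ t) (gder a b γ s₁) := ⟨h.le, hpos1.le⟩
        obtain ⟨c, hc, hc0⟩ := intermediate_value_Icc' ht.1 (hcont.mono hsub) h0mem
        exact hne c (hsub hc) hc0
      · exact h
    have heqon : Set.EqOn (fun t => speed γ t / (γ t).2.2)
        (gder a b γ) (Set.uIcc s₁ s₂) := by
      rw [Set.uIcc_of_le h12]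
      intro t ht
      simp only
      rw [← heq t ht, abs_of_pos (hsign t ht)]
    have hnn : 0 ≤ Gab a b (γ s₂) - Gab a b (γ s₁) := by
      rw [← hftc]
      exact intervalIntegral.integral_nonneg h12 (fun u hu => (hsign u hu).le)
    calc jemLength γ s₁ s₂ = ∫ t in s₁..s₂, gder a b γ t :=
          intervalIntegral.integral_congr heqon
      _ = Gab a b (γ s₂) - Gab a b (γ s₁) := hftc
      _ = |Gab a b (γ s₂) - Gab a b (γ s₁)| := (abs_of_nonneg hnn).symm


lemma speed_pos {γ : ℝ → ℝ × ℝ × ℝ} {t : ℝ} (hreg : deriv γ t ≠ 0) : 0 < speed γ t := by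
  apply Real.sqrt_pos.mpr
  by_contra h
  push_neg at h
  have h1 : (deriv γ t).1 = 0 := by
    nlinarith [sq_nonneg (deriv γ t).1, sq_nonneg (deriv γ t).2.1, sq_nonneg (deriv γ t).2.2]
  have h2 : (deriv γ t).2.1 = 0 := by
    nlinarith [sq_nonneg (deriv γ t).1, sq_nonneg (deriv γ t).2.1, sq_nonneg (deriv γ t).2.2]
  have h3 : (deriv γ t).2.2 = 0 := by
    nlinarith [sq_nonneg (deriv γ t).1, sq_nonneg (deriv γ t).2.1, sq_nonneg (deriv γ t).2.2]
  apply hreg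
  rw [show (0:ℝ×ℝ×ℝ) = ((0:ℝ),((0:ℝ),(0:ℝ))) from rfl, Prod.ext_iff]
  exact ⟨h1, by rw [Prod.ext_iff]; exact ⟨h2, h3⟩⟩

/-- derivative of the plane constraint vanishes -/
lemma plane_deriv_zero {γ : ℝ → ℝ × ℝ × ℝ} (hγ : ContDiff ℝ 1 γ) {A B C : ℝ}
    (hpl : ∀ t, A * (γ t).1 + B * (γ t).2.1 = C) (t : ℝ) :
    A * (deriv γ t).1 + B * (deriv γ t).2.1 = 0 := by
  have hd := (hγ.differentiable one_ne_zero t).hasDerivAt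
  have h1 : HasDerivAt (fun s => A * (γ s).1 + B * (γ s).2.1)
      (A * (deriv γ t).1 + B * (deriv γ t).2.1) t :=
    ((hasDerivAt_c1 hd).const_mul A).add ((hasDerivAt_c2 hd).const_mul B)
  have h0 : HasDerivAt (fun s => A * (γ s).1 + B * (γ s).2.1) 0 t :=
    (hasDerivAt_const t C).congr_of_eventuallyEq
      (Filter.Eventually.of_forall (fun s => hpl s))
  exact h1.unique h0

lemma geodesic_of_plane {γ : ℝ → ℝ × ℝ × ℝ} (hγ : ContDiff ℝ 1 γ)
    (hmem : ∀ t, γ t ∈ upperHemi) (hreg : ∀ t, deriv γ t ≠ 0) {A B C : ℝ}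
    (hAB0 : ¬(A = 0 ∧ B = 0)) (hpl : ∀ t, A * (γ t).1 + B * (γ t).2.1 = C) :
    IsJemGeodesic γ := by
  have hr2 : 0 < A^2 + B^2 := by
    rcases not_and_or.mp hAB0 with h | h
    · nlinarith [mul_self_pos.mpr h, sq_nonneg B]
    · nlinarith [mul_self_pos.mpr h, sq_nonneg A]
  set r := Real.sqrt (A^2 + B^2) with hrdef
  have hr : 0 < r := Real.sqrt_pos.mpr hr2
  have hrsq : r^2 = A^2 + B^2 := Real.sq_sqrt hr2.le
  set A' := A / r with hA'
  set B' := B / r with hB'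
  set C' := C / r with hC'
  have hAB' : A'^2 + B'^2 = 1 := by
    rw [hA', hB', div_pow, div_pow, ← add_div, ← hrsq, div_self (pow_ne_zero 2 hr.ne')]
  have hpl' : ∀ t, A' * (γ t).1 + B' * (γ t).2.1 = C' := by
    intro t
    rw [hA', hB', hC']
    field_simp
    linear_combination hpl t
  have hC2 : C'^2 < 1 := by
    obtain ⟨hsph, hz⟩ := hmem 0
    have hc := hpl' 0
    rw [← hc]
    have key : (A'*(γ 0).1 + B'*(γ 0).2.1)^2 + (A'*(γ 0).2.1 - B'*(γ 0).1)^2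
        = (γ 0).1^2 + (γ 0).2.1^2 := by linear_combination ((γ 0).1^2 + (γ 0).2.1^2) * hAB'
    have hz2 : 0 < (γ 0).2.2^2 := pow_pos hz 2
    nlinarith [sq_nonneg (A'*(γ 0).2.1 - B'*(γ 0).1)]
  set ρ := Real.sqrt (1 - C'^2) with hρdef
  have hρp : 0 < ρ := Real.sqrt_pos.mpr (by linarith)
  have hρ : ρ^2 = 1 - C'^2 := Real.sq_sqrt (by linarith)
  set a := A'*C' - B'*ρ with ha
  set b := B'*C' + A'*ρ with hb
  have hab : a^2 + b^2 = 1 := by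
    rw [ha, hb]; linear_combination (C'^2 + ρ^2)*hAB' + hρ
  have horth : ∀ t, (γ t).1*(deriv γ t).1 + (γ t).2.1*(deriv γ t).2.1
      + (γ t).2.2*(deriv γ t).2.2 = 0 :=
    fun t => orth_interior hγ isOpen_univ (fun u _ => (hmem u).1) (Set.mem_univ t)
  have heq : ∀ t, |gder a b γ t| = speed γ t / (γ t).2.2 :=
    fun t => gder_eq hAB' hρ ha hb hab (hmem t) (horth t) (hpl' t)
      (plane_deriv_zero hγ hpl' t)
  intro t0
  refine ⟨1, one_pos, fun s₁ s₂ _ _ h12 => ?_⟩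
  have hlen := length_eq_of_calibrated hγ h12 (fun t _ => (hmem t).2)
    (fun t _ => one_sub_s_pos hab (hmem t)) (fun t _ => heq t)
    (fun t _ => speed_pos (hreg t))
  have h1 : jemDist (γ s₁) (γ s₂) ≤ jemLength γ s₁ s₂ :=
    jemDist_le (reparam_mem hγ hmem h12)
  have h2 : |Gab a b (γ s₂) - Gab a b (γ s₁)| ≤ jemDist (γ s₁) (γ s₂) :=
    le_jemDist hab ⟨_, reparam_mem hγ hmem h12⟩
  linarith



lemma jemDist_self_nonpos {p : ℝ × ℝ × ℝ} (hp : p ∈ upperHemi) : jemDist p p ≤ 0 := by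
  apply jemDist_le
  refine ⟨fun _ => p, contDiff_const, rfl, rfl, fun t _ => hp, ?_⟩
  have hz : ∀ t : ℝ, speed (fun _ => p) t / ((fun _ : ℝ => p) t).2.2 = 0 := by
    intro t
    simp [speed, deriv_const]
  simp only [jemLength, hz, intervalIntegral.integral_zero]

lemma between_mem {θp θq t l u : ℝ} (h1 : l < θp) (h2 : θp < u) (h3 : l < θq) (h4 : θq < u)
    (ht0 : 0 ≤ t) (ht1 : t ≤ 1) : l < θp + t*(θq - θp) ∧ θp + t*(θq - θp) < u := by
  rcases le_total θp θq with h | h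
  · have h5 : 0 ≤ t * (θq - θp) := mul_nonneg ht0 (by linarith)
    have h6 : t * (θq - θp) ≤ θq - θp := by nlinarith
    constructor <;> linarith
  · have h5 : t * (θq - θp) ≤ 0 := mul_nonpos_of_nonneg_of_nonpos ht0 (by linarith)
    have h6 : θq - θp ≤ t * (θq - θp) := by nlinarith
    constructor <;> linarith

set_option maxHeartbeats 1000000 in
/-- the circular arc competitor: distance is at most the potential difference -/
lemma arc_le {A B C ρ a b : ℝ} (hAB : A^2 + B^2 = 1) (hρp : 0 < ρ) (hρ : ρ^2 = 1 - C^2)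
    (ha : a = A*C - B*ρ) (hb : b = B*C + A*ρ)
    {p q : ℝ × ℝ × ℝ} (hp : p ∈ upperHemi) (hq : q ∈ upperHemi)
    (hpp : A*p.1 + B*p.2.1 = C) (hqq : A*q.1 + B*q.2.1 = C) :
    jemDist p q ≤ |Gab a b q - Gab a b p| := by
  have hab : a^2 + b^2 = 1 := by rw [ha, hb]; linear_combination (C^2 + ρ^2)*hAB + hρ
  obtain ⟨hps, hpz⟩ := hp
  obtain ⟨hqs, hqz⟩ := hq
  have hρ2 : (0:ℝ) < ρ^2 := pow_pos hρp 2
  set cp := (A*p.2.1 - B*p.1)/ρ with hcp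
  set cq := (A*q.2.1 - B*q.1)/ρ with hcq
  have hp1 : (A*p.2.1 - B*p.1)^2 = ρ^2 - p.2.2^2 := by
    linear_combination (p.1^2 + p.2.1^2)*hAB + hps - (A*p.1 + B*p.2.1 + C)*hpp - hρ
  have hq1 : (A*q.2.1 - B*q.1)^2 = ρ^2 - q.2.2^2 := by
    linear_combination (q.1^2 + q.2.1^2)*hAB + hqs - (A*q.1 + B*q.2.1 + C)*hqq - hρ
  have hcp2 : cp^2 = 1 - (p.2.2/ρ)^2 := by
    rw [hcp, div_pow, div_pow, hp1]
    field_simp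
  have hcq2 : cq^2 = 1 - (q.2.2/ρ)^2 := by
    rw [hcq, div_pow, div_pow, hq1]
    field_simp
  have hpzρ : 0 < p.2.2/ρ := div_pos hpz hρp
  have hqzρ : 0 < q.2.2/ρ := div_pos hqz hρp
  have hcplt : cp^2 < 1 := by have h3 := pow_pos hpzρ 2; linarith
  have hcqlt : cq^2 < 1 := by have h3 := pow_pos hqzρ 2; linarith
  have hcpm1 : -1 < cp := by nlinarith [sq_nonneg (cp + 1), hcplt]
  have hcpp1 : cp < 1 := by nlinarith [sq_nonneg (cp - 1), hcplt]
  have hcqm1 : -1 < cq := by nlinarith [sq_nonneg (cq + 1), hcqlt]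
  have hcqp1 : cq < 1 := by nlinarith [sq_nonneg (cq - 1), hcqlt]
  set θp := Real.arccos cp with hθpd
  set θq := Real.arccos cq with hθqd
  have hcosp : Real.cos θp = cp := Real.cos_arccos hcpm1.le hcpp1.le
  have hcosq : Real.cos θq = cq := Real.cos_arccos hcqm1.le hcqp1.le
  have hsinp : Real.sin θp = p.2.2/ρ := by
    rw [hθpd, Real.sin_arccos, show 1 - cp^2 = (p.2.2/ρ)^2 by linarith]
    exact Real.sqrt_sq hpzρ.le
  have hsinq : Real.sin θq = q.2.2/ρ := by
    rw [hθqd, Real.sin_arccos, show 1 - cq^2 = (q.2.2/ρ)^2 by linarith]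
    exact Real.sqrt_sq hqzρ.le
  have hθp0 : 0 < θp := Real.arccos_pos.mpr hcpp1
  have hθppi : θp < Real.pi := lt_of_le_of_ne (Real.arccos_le_pi cp)
    (fun h => absurd (Real.arccos_eq_pi.mp h) (by linarith))
  have hθq0 : 0 < θq := Real.arccos_pos.mpr hcqp1
  have hθqpi : θq < Real.pi := lt_of_le_of_ne (Real.arccos_le_pi cq)
    (fun h => absurd (Real.arccos_eq_pi.mp h) (by linarith))
  set d := θq - θp with hdd
  set θ : ℝ → ℝ := fun t => θp + t*(θq - θp) with hθd
  have hθc : ContDiff ℝ 1 θ := by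
    apply ContDiff.add contDiff_const
    exact contDiff_id.mul contDiff_const
  set σ : ℝ → ℝ × ℝ × ℝ := fun t =>
    (C*A - B*(ρ*Real.cos (θ t)), (C*B + A*(ρ*Real.cos (θ t)), ρ*Real.sin (θ t))) with hσd
  have hσc : ContDiff ℝ 1 σ := by
    refine ContDiff.prodMk ?_ (ContDiff.prodMk ?_ ?_)
    · exact contDiff_const.sub (contDiff_const.mul (contDiff_const.mul
        ((Real.contDiff_cos.of_le le_top).comp hθc)))
    · exact contDiff_const.add (contDiff_const.mul (contDiff_const.mul
        ((Real.contDiff_cos.of_le le_top).comp hθc)))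
    · exact contDiff_const.mul ((Real.contDiff_sin.of_le le_top).comp hθc)
  have hθ0 : θ 0 = θp := by simp [hθd]
  have hθ1 : θ 1 = θq := by simp [hθd]
  have hρcp : ρ * cp = A*p.2.1 - B*p.1 := by rw [hcp]; field_simp
  have hρcq : ρ * cq = A*q.2.1 - B*q.1 := by rw [hcq]; field_simp
  have hσ0 : σ 0 = p := by
    rw [hσd]
    simp only [hθ0, hcosp, hsinp]
    refine Prod.ext ?_ (Prod.ext ?_ ?_)
    · show C*A - B*(ρ*cp) = p.1
      rw [hρcp]; linear_combination (-A)*hpp + p.1*hAB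
    · show C*B + A*(ρ*cp) = p.2.1
      rw [hρcp]; linear_combination (-B)*hpp + p.2.1*hAB
    · show ρ*(p.2.2/ρ) = p.2.2
      field_simp
  have hσ1 : σ 1 = q := by
    rw [hσd]
    simp only [hθ1, hcosq, hsinq]
    refine Prod.ext ?_ (Prod.ext ?_ ?_)
    · show C*A - B*(ρ*cq) = q.1
      rw [hρcq]; linear_combination (-A)*hqq + q.1*hAB
    · show C*B + A*(ρ*cq) = q.2.1
      rw [hρcq]; linear_combination (-B)*hqq + q.2.1*hAB
    · show ρ*(q.2.2/ρ) = q.2.2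
      field_simp
  have hsphσ : ∀ t, (σ t).1^2 + (σ t).2.1^2 + (σ t).2.2^2 = 1 := by
    intro t
    show (C*A - B*(ρ*Real.cos (θ t)))^2 + (C*B + A*(ρ*Real.cos (θ t)))^2
      + (ρ*Real.sin (θ t))^2 = 1
    have hpyth := Real.sin_sq_add_cos_sq (θ t)
    linear_combination (C^2 + ρ^2*(Real.cos (θ t))^2)*hAB + ρ^2*hpyth + hρ
  have hplσ : ∀ t, A*(σ t).1 + B*(σ t).2.1 = C := by
    intro t
    show A*(C*A - B*(ρ*Real.cos (θ t))) + B*(C*B + A*(ρ*Real.cos (θ t))) = C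
    linear_combination C*hAB
  have hmemI : ∀ t ∈ Set.Icc (0:ℝ) 1, σ t ∈ upperHemi := by
    intro t ht
    refine ⟨hsphσ t, ?_⟩
    show 0 < ρ*Real.sin (θ t)
    have hbet := between_mem hθp0 hθppi hθq0 hθqpi ht.1 ht.2
    exact mul_pos hρp (Real.sin_pos_of_pos_of_lt_pi hbet.1 hbet.2)
  by_cases hd0 : d = 0
  · -- degenerate: p = q
    have hpq : p = q := by
      rw [← hσ0, ← hσ1]
      have : θ 1 = θ 0 := by rw [hθ0, hθ1]; rw [hdd] at hd0; linarith
      rw [hσd]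
      simp only [this]
    rw [← hpq]
    have h0 : |Gab a b p - Gab a b p| = 0 := by simp
    rw [h0]
    exact jemDist_self_nonpos ⟨hps, hpz⟩
  · -- genuine arc
    have hθder : ∀ t : ℝ, HasDerivAt θ d t := by
      intro t
      rw [hθd, hdd]
      simpa using ((hasDerivAt_id t).mul_const (θq - θp)).const_add θp
    have hV : ∀ t : ℝ, HasDerivAt σ
        (B*(ρ*(Real.sin (θ t)*d)), (-(A*(ρ*(Real.sin (θ t)*d))), ρ*(Real.cos (θ t)*d))) t := by
      intro t
      refine HasDerivAt.prodMk ?_ (HasDerivAt.prodMk ?_ ?_)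
      · have := (((hθder t).cos.const_mul ρ).const_mul B).const_sub (C*A)
        convert this using 1
        ring
      · have := (((hθder t).cos.const_mul ρ).const_mul A).const_add (C*B)
        convert this using 1
        ring
      · exact (hθder t).sin.const_mul ρ
    have hspd : ∀ t : ℝ, speed σ t = ρ*|d| := by
      intro t
      have hdv := (hV t).deriv
      have hpyth := Real.sin_sq_add_cos_sq (θ t)
      simp only [speed, hdv]
      have hsum : (B*(ρ*(Real.sin (θ t)*d)))^2 + (-(A*(ρ*(Real.sin (θ t)*d))))^2
          + (ρ*(Real.cos (θ t)*d))^2 = (ρ*d)^2 := by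
        linear_combination (ρ^2*d^2*(Real.sin (θ t))^2)*hAB + (ρ^2*d^2)*hpyth
      rw [hsum, Real.sqrt_sq_eq_abs, abs_mul, abs_of_pos hρp]
    have horthσ : ∀ t, (σ t).1*(deriv σ t).1 + (σ t).2.1*(deriv σ t).2.1
        + (σ t).2.2*(deriv σ t).2.2 = 0 :=
      fun t => orth_interior hσc isOpen_univ (fun u _ => hsphσ u) (Set.mem_univ t)
    have heqσ : ∀ t ∈ Set.Icc (0:ℝ) 1, |gder a b σ t| = speed σ t / (σ t).2.2 :=
      fun t ht => gder_eq hAB hρ ha hb hab (hmemI t ht) (horthσ t) (hplσ t)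
        (plane_deriv_zero hσc hplσ t)
    have hposσ : ∀ t ∈ Set.Icc (0:ℝ) 1, 0 < speed σ t := by
      intro t _
      rw [hspd t]
      exact mul_pos hρp (abs_pos.mpr hd0)
    have hlen := length_eq_of_calibrated hσc zero_le_one
      (fun t ht => (hmemI t ht).2) (fun t ht => one_sub_s_pos hab (hmemI t ht))
      heqσ hposσ
    rw [hσ0, hσ1] at hlen
    calc jemDist p q ≤ jemLength σ 0 1 := jemDist_le ⟨σ, hσc, hσ0, hσ1, hmemI, rfl⟩
      _ = |Gab a b q - Gab a b p| := hlen


/-- from equality of calibration, recover the squared identity -/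
lemma calib_eq_of_abs {a b : ℝ} (hab : a^2 + b^2 = 1) {σ : ℝ → ℝ × ℝ × ℝ} {t : ℝ}
    (hw : σ t ∈ upperHemi)
    (h : |gder a b σ t| = speed σ t / (σ t).2.2) :
    ((σ t).2.2*(a*(deriv σ t).1 + b*(deriv σ t).2.1)
      + (deriv σ t).2.2*(1 - (a*(σ t).1 + b*(σ t).2.1)))^2
    = (1 - (a*(σ t).1 + b*(σ t).2.1))^2
      * ((deriv σ t).1^2 + (deriv σ t).2.1^2 + (deriv σ t).2.2^2) := by
  obtain ⟨hsph, hz⟩ := hw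
  set x := (σ t).1 with hxd; set y := (σ t).2.1 with hyd; set z := (σ t).2.2 with hzd
  set u := (deriv σ t).1 with hud; set v := (deriv σ t).2.1 with hvd
  set r := (deriv σ t).2.2 with hrd
  have hs : 0 < 1 - (a*x + b*y) := one_sub_s_pos hab ⟨hsph, hz⟩
  have hg : gder a b σ t = -((z*(a*u + b*v) + r*(1 - (a*x + b*y))) / ((1 - (a*x+b*y)) * z)) := by
    simp only [gder, ← hxd, ← hyd, ← hzd, ← hud, ← hvd, ← hrd]
    field_simp
    ring
  have hS : speed σ t = Real.sqrt (u^2 + v^2 + r^2) := rfl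
  rw [hg, abs_neg, abs_div, abs_of_pos (mul_pos hs hz), hS] at h
  rw [div_eq_div_iff (mul_pos hs hz).ne' hz.ne'] at h
  have h2 : |z*(a*u + b*v) + r*(1 - (a*x + b*y))|
      = (1 - (a*x+b*y)) * Real.sqrt (u^2 + v^2 + r^2) := by
    apply mul_right_cancel₀ hz.ne'
    linear_combination h
  have h4 : (z*(a*u + b*v) + r*(1 - (a*x + b*y)))^2
      = ((1 - (a*x+b*y)) * Real.sqrt (u^2 + v^2 + r^2))^2 := by
    rw [← sq_abs, h2]
  calc (z*(a*u + b*v) + r*(1 - (a*x + b*y)))^2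
      = (1 - (a*x+b*y))^2 * (Real.sqrt (u^2 + v^2 + r^2))^2 := by rw [h4]; ring
    _ = (1 - (a*x+b*y))^2 * (u^2 + v^2 + r^2) := by
        rw [Real.sq_sqrt (by positivity)]

/-- equality case forces the ODE for the plane defect -/
lemma eq_case_ode {A B C ρ a b x y z u v r : ℝ}
    (hAB : A^2 + B^2 = 1) (hρ : ρ^2 = 1 - C^2) (ha : a = A*C - B*ρ) (hb : b = B*C + A*ρ)
    (hsph : x^2 + y^2 + z^2 = 1) (hor : x*u + y*v + z*r = 0)
    (heq : (z*(a*u + b*v) + r*(1 - (a*x + b*y)))^2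
      = (1 - (a*x + b*y))^2*(u^2 + v^2 + r^2)) :
    (1 - (a*x + b*y))^2 * (A*u + B*v)
      = ((z*(x - a))*u + (z*(y - b))*v + ((a*x + b*y) - (x^2 + y^2))*r)
        * (z*(A*x + B*y - C)) := by
  have hab : a^2 + b^2 = 1 := by rw [ha, hb]; linear_combination (C^2 + ρ^2)*hAB + hρ
  set E1 := z*(x - a) with hE1
  set E2 := z*(y - b) with hE2
  set E3 := (a*x + b*y) - (x^2 + y^2) with hE3
  have hnorm : E1^2 + E2^2 + E3^2 = (1 - (a*x + b*y))^2 := by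
    rw [hE1, hE2, hE3]
    linear_combination (x^2+y^2+a^2+b^2-2*(a*x+b*y)) * hsph + (1-x^2-y^2) * hab
  have hinner : E1*u + E2*v + E3*r = -(z*(a*u + b*v) + r*(1 - (a*x + b*y))) := by
    rw [hE1, hE2, hE3]
    linear_combination z*hor - r*hsph
  have hsq : (E1*u + E2*v + E3*r)^2 = (E1^2 + E2^2 + E3^2)*(u^2 + v^2 + r^2) := by
    rw [hnorm]
    rw [show (E1*u + E2*v + E3*r)^2 = (z*(a*u + b*v) + r*(1 - (a*x + b*y)))^2 by
      rw [hinner]; ring]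
    exact heq
  have hlag : (E1*v - E2*u)^2 + (E1*r - E3*u)^2 + (E2*r - E3*v)^2 = 0 := by
    linear_combination -hsq
  have c1 : E1*v - E2*u = 0 := by
    have h1 : (E1*v - E2*u)^2 ≤ 0 := by
      linarith [sq_nonneg (E1*r - E3*u), sq_nonneg (E2*r - E3*v)]
    exact sq_eq_zero_iff.mp (le_antisymm h1 (sq_nonneg _))
  have c2 : E1*r - E3*u = 0 := by
    have h1 : (E1*r - E3*u)^2 ≤ 0 := by
      linarith [sq_nonneg (E1*v - E2*u), sq_nonneg (E2*r - E3*v)]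
    exact sq_eq_zero_iff.mp (le_antisymm h1 (sq_nonneg _))
  have c3 : E2*r - E3*v = 0 := by
    have h1 : (E2*r - E3*v)^2 ≤ 0 := by
      linarith [sq_nonneg (E1*v - E2*u), sq_nonneg (E1*r - E3*u)]
    exact sq_eq_zero_iff.mp (le_antisymm h1 (sq_nonneg _))
  have hAa : A*a + B*b = C := by rw [ha, hb]; linear_combination C*hAB
  have hu' : (E1^2 + E2^2 + E3^2)*u = (E1*u + E2*v + E3*r)*E1 := by
    linear_combination (-E2)*c1 + (-E3)*c2
  have hv' : (E1^2 + E2^2 + E3^2)*v = (E1*u + E2*v + E3*r)*E2 := by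
    linear_combination E1*c1 + (-E3)*c3
  have hAE : A*E1 + B*E2 = z*(A*x + B*y - C) := by
    rw [hE1, hE2]
    linear_combination (-z)*hAa
  calc (1 - (a*x + b*y))^2 * (A*u + B*v)
      = (E1^2 + E2^2 + E3^2)*(A*u + B*v) := by rw [hnorm]
    _ = (E1*u + E2*v + E3*r)*(A*E1 + B*E2) := by linear_combination A*hu' + B*hv'
    _ = (E1*u + E2*v + E3*r)*(z*(A*x + B*y - C)) := by rw [hAE]

/-- Gronwall-type vanishing lemma -/
lemma ode_vanish {f f' μ : ℝ → ℝ} {s₁ s₂ : ℝ}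
    (hf : ∀ t, HasDerivAt f (f' t) t) (hfc : Continuous f) (hμc : Continuous μ)
    (hode : ∀ t ∈ Set.Icc s₁ s₂, f' t = μ t * f t) (h0 : f s₁ = 0) :
    ∀ t ∈ Set.Icc s₁ s₂, f t = 0 := by
  set Φ : ℝ → ℝ := fun t => ∫ u in s₁..t, μ u with hΦd
  have hΦ : ∀ t, HasDerivAt Φ (μ t) t :=
    fun t => (hμc.integral_hasStrictDerivAt s₁ t).hasDerivAt
  have hΦc : Continuous Φ := by
    apply continuous_iff_continuousAt.mpr
    exact fun t => (hΦ t).continuousAt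
  set g : ℝ → ℝ := fun t => f t * Real.exp (-Φ t) with hgd
  have hg : ∀ t, HasDerivAt g ((f' t - μ t * f t) * Real.exp (-Φ t)) t := by
    intro t
    have he : HasDerivAt (fun u => Real.exp (-Φ u)) (-(μ t) * Real.exp (-Φ t)) t := by
      have := ((hΦ t).neg).exp
      convert this using 1
      · rfl
      · simp only [Pi.neg_apply]; ring
    have := (hf t).mul he
    exact this.congr_deriv (by ring)
  have hcg : ContinuousOn g (Set.Icc s₁ s₂) :=
    (hfc.mul (Real.continuous_exp.comp hΦc.neg)).continuousOn
  have hzero : ∀ t ∈ Set.Icc s₁ s₂, g t = g s₁ := by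
    apply constant_of_has_deriv_right_zero hcg
    intro x hx
    have hx' : x ∈ Set.Icc s₁ s₂ := ⟨hx.1, hx.2.le⟩
    have hgx := hg x
    rw [hode x hx'] at hgx
    simpa using hgx.hasDerivWithinAt
  intro t ht
  have h1 := hzero t ht
  have h2 : g s₁ = 0 := by
    show f s₁ * Real.exp (-Φ s₁) = 0
    rw [h0, zero_mul]
  rw [h2] at h1
  have h3 : f t * Real.exp (-Φ t) = 0 := h1
  rcases mul_eq_zero.mp h3 with h | h
  · exact h
  · exact absurd h (Real.exp_ne_zero _)


set_option maxHeartbeats 1000000 in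
/-- a geodesic is locally contained in a vertical plane -/
lemma local_plane {γ : ℝ → ℝ × ℝ × ℝ} (hγ : ContDiff ℝ 1 γ) (hmem : ∀ t, γ t ∈ upperHemi)
    (hreg : ∀ t, deriv γ t ≠ 0) (hgeo : IsJemGeodesic γ) (t0 : ℝ) :
    ∃ A B C : ℝ, A^2 + B^2 = 1 ∧ ∃ δ : ℝ, 0 < δ ∧ ∀ t ∈ Set.Icc (t0 - δ) (t0 + δ),
      A*(γ t).1 + B*(γ t).2.1 = C := by
  obtain ⟨ε, hε, hloc⟩ := hgeo t0
  set s₁ := t0 - ε/3 with hs₁d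
  set s₂ := t0 + ε/3 with hs₂d
  have hs12 : s₁ < s₂ := by rw [hs₁d, hs₂d]; linarith
  have habs1 : |s₁ - t0| < ε := by
    rw [show s₁ - t0 = -(ε/3) by rw [hs₁d]; ring, abs_neg, abs_of_pos (by linarith)]
    linarith
  have habs2 : |s₂ - t0| < ε := by
    rw [show s₂ - t0 = ε/3 by rw [hs₂d]; ring, abs_of_pos (by linarith)]
    linarith
  have hgd := hloc s₁ s₂ habs1 habs2 hs12.le
  have hintz : ∀ t ∈ Set.Icc s₁ s₂, 0 < (γ t).2.2 := fun t _ => (hmem t).2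
  have hlpos : 0 < jemLength γ s₁ s₂ := by
    apply intervalIntegral.integral_pos hs12 (speedz_contOn hγ hintz)
    · exact fun x hx => div_nonneg (speed_nonneg γ x) (hmem x).2.le
    · exact ⟨s₁, ⟨le_rfl, hs12.le⟩, div_pos (speed_pos (hreg s₁)) (hmem s₁).2⟩
  have hpq : γ s₁ ≠ γ s₂ := by
    intro h
    have h1 : jemDist (γ s₁) (γ s₂) ≤ 0 := by rw [h]; exact jemDist_self_nonpos (hmem s₂)
    rw [hgd] at h1
    linarith
  -- plane through the two endpoints
  set d1 := (γ s₂).1 - (γ s₁).1 with hd1d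
  set d2 := (γ s₂).2.1 - (γ s₁).2.1 with hd2d
  have hL2 : 0 < d1^2 + d2^2 := by
    rcases eq_or_ne d1 0 with h1 | h1
    · rcases eq_or_ne d2 0 with h2 | h2
      · exfalso
        apply hpq
        have e1 : (γ s₁).1 = (γ s₂).1 := by rw [hd1d] at h1; linarith
        have e2 : (γ s₁).2.1 = (γ s₂).2.1 := by rw [hd2d] at h2; linarith
        obtain ⟨hp3s, hp3z⟩ := hmem s₁
        obtain ⟨hq3s, hq3z⟩ := hmem s₂
        rw [← e1, ← e2] at hq3s
        have e : (γ s₁).2.2^2 = (γ s₂).2.2^2 := by linarith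
        have e3 : (γ s₁).2.2 = (γ s₂).2.2 := by
          calc (γ s₁).2.2 = Real.sqrt ((γ s₁).2.2^2) := (Real.sqrt_sq hp3z.le).symm
            _ = Real.sqrt ((γ s₂).2.2^2) := by rw [e]
            _ = (γ s₂).2.2 := Real.sqrt_sq hq3z.le
        exact Prod.ext e1 (Prod.ext e2 e3)
      · nlinarith [sq_nonneg d1, mul_self_pos.mpr h2]
    · nlinarith [sq_nonneg d2, mul_self_pos.mpr h1]
  set L := Real.sqrt (d1^2 + d2^2) with hLd
  have hL : 0 < L := Real.sqrt_pos.mpr hL2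
  have hLsq : L^2 = d1^2 + d2^2 := Real.sq_sqrt hL2.le
  set A := -d2/L with hAd
  set B := d1/L with hBd
  have hAB : A^2 + B^2 = 1 := by
    rw [hAd, hBd, div_pow, div_pow, ← add_div, hLsq]
    rw [show (-d2)^2 + d1^2 = d1^2 + d2^2 by ring]
    exact div_self hL2.ne'
  set C := A*(γ s₁).1 + B*(γ s₁).2.1 with hCd
  have hCp : A*(γ s₁).1 + B*(γ s₁).2.1 = C := hCd.symm
  have hCq : A*(γ s₂).1 + B*(γ s₂).2.1 = C := by
    rw [hCd, hAd, hBd]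
    field_simp
    rw [hd1d, hd2d]
    ring
  have hC2 : C^2 < 1 := by
    obtain ⟨hsph, hz⟩ := hmem s₁
    rw [← hCp]
    have key : (A*(γ s₁).1 + B*(γ s₁).2.1)^2 + (A*(γ s₁).2.1 - B*(γ s₁).1)^2
        = (γ s₁).1^2 + (γ s₁).2.1^2 := by
      linear_combination ((γ s₁).1^2 + (γ s₁).2.1^2) * hAB
    have hz2 : 0 < (γ s₁).2.2^2 := pow_pos hz 2
    nlinarith [sq_nonneg (A*(γ s₁).2.1 - B*(γ s₁).1)]
  set ρ := Real.sqrt (1 - C^2) with hρd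
  have hρp : 0 < ρ := Real.sqrt_pos.mpr (by linarith)
  have hρ : ρ^2 = 1 - C^2 := Real.sq_sqrt (by linarith)
  set a := A*C - B*ρ with ha
  set b := B*C + A*ρ with hb
  have hab : a^2 + b^2 = 1 := by rw [ha, hb]; linear_combination (C^2 + ρ^2)*hAB + hρ
  -- distance equals potential difference
  have hone : |Gab a b (γ s₂) - Gab a b (γ s₁)| ≤ jemDist (γ s₁) (γ s₂) :=
    le_jemDist hab ⟨_, reparam_mem hγ hmem hs12.le⟩
  have htwo : jemDist (γ s₁) (γ s₂) ≤ |Gab a b (γ s₂) - Gab a b (γ s₁)| :=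
    arc_le hAB hρp hρ ha hb (hmem s₁) (hmem s₂) hCp hCq
  have hdeq : jemDist (γ s₁) (γ s₂) = |Gab a b (γ s₂) - Gab a b (γ s₁)| :=
    le_antisymm htwo hone
  have hlen : jemLength γ s₁ s₂ = |Gab a b (γ s₂) - Gab a b (γ s₁)| := by
    rw [← hgd, hdeq]
  -- squeeze: pointwise calibration equality on the interval
  have horth : ∀ t, (γ t).1*(deriv γ t).1 + (γ t).2.1*(deriv γ t).2.1
      + (γ t).2.2*(deriv γ t).2.2 = 0 :=
    fun t => orth_interior hγ isOpen_univ (fun u _ => (hmem u).1) (Set.mem_univ t)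
  have hle : ∀ t ∈ Set.Icc s₁ s₂, |gder a b γ t| ≤ speed γ t / (γ t).2.2 :=
    fun t _ => gder_le hab (hmem t) (horth t)
  have hspos : ∀ t ∈ Set.Icc s₁ s₂, 0 < 1 - (a*(γ t).1 + b*(γ t).2.1) :=
    fun t _ => one_sub_s_pos hab (hmem t)
  have hftc := ftc_Gab hγ hs12.le hintz hspos
  have hgcont : ContinuousOn (gder a b γ) (Set.Icc s₁ s₂) := gder_contOn hγ hintz hspos
  have habs_int : ∫ t in s₁..s₂, |gder a b γ t| = jemLength γ s₁ s₂ := by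
    have hup : (∫ t in s₁..s₂, |gder a b γ t|) ≤ jemLength γ s₁ s₂ := by
      apply intervalIntegral.integral_mono_on hs12.le
      · apply ContinuousOn.intervalIntegrable; rw [Set.uIcc_of_le hs12.le]; exact hgcont.abs
      · apply ContinuousOn.intervalIntegrable; rw [Set.uIcc_of_le hs12.le]
        exact speedz_contOn hγ hintz
      · exact hle
    have hlow : |Gab a b (γ s₂) - Gab a b (γ s₁)| ≤ ∫ t in s₁..s₂, |gder a b γ t| := by
      rw [← hftc]
      exact intervalIntegral.abs_integral_le_integral_abs hs12.le
    rw [hlen]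
    linarith [hlen ▸ hup]
  have hpt : ∀ t ∈ Set.Icc s₁ s₂, |gder a b γ t| = speed γ t / (γ t).2.2 := by
    intro t ht
    by_contra hne
    have hlt : |gder a b γ t| < speed γ t / (γ t).2.2 := lt_of_le_of_ne (hle t ht) hne
    have := intervalIntegral.integral_lt_integral_of_continuousOn_of_le_of_exists_lt hs12
      hgcont.abs (speedz_contOn hγ hintz)
      (fun x hx => hle x ⟨hx.1.le, hx.2⟩) ⟨t, ht, hlt⟩
    rw [habs_int] at this
    exact lt_irrefl _ this
  -- the plane-defect satisfies a linear ODE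
  have cγ : Continuous γ := hγ.continuous
  have cd : Continuous (deriv γ) := hγ.continuous_deriv le_rfl
  have c1 : Continuous fun t => (γ t).1 := cγ.fst
  have c2 : Continuous fun t => (γ t).2.1 := cγ.snd.fst
  have c3 : Continuous fun t => (γ t).2.2 := cγ.snd.snd
  have cu : Continuous fun t => (deriv γ t).1 := cd.fst
  have cv : Continuous fun t => (deriv γ t).2.1 := cd.snd.fst
  have cr : Continuous fun t => (deriv γ t).2.2 := cd.snd.snd
  have hf' : ∀ t, HasDerivAt (fun t => A*(γ t).1 + B*(γ t).2.1 - C)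
      (A*(deriv γ t).1 + B*(deriv γ t).2.1) t := by
    intro t
    have hd := (hγ.differentiable one_ne_zero t).hasDerivAt
    have := (((hasDerivAt_c1 hd).const_mul A).add ((hasDerivAt_c2 hd).const_mul B)).sub_const C
    simpa using this
  have hfc : Continuous fun t => A*(γ t).1 + B*(γ t).2.1 - C :=
    ((continuous_const.mul c1).add (continuous_const.mul c2)).sub continuous_const
  have hμc : Continuous fun t =>
      (((γ t).2.2*((γ t).1 - a))*(deriv γ t).1 + ((γ t).2.2*((γ t).2.1 - b))*(deriv γ t).2.1
        + ((a*(γ t).1 + b*(γ t).2.1) - ((γ t).1^2 + (γ t).2.1^2))*(deriv γ t).2.2)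
      * (γ t).2.2 / (1 - (a*(γ t).1 + b*(γ t).2.1))^2 := by
    apply Continuous.div
    · apply Continuous.mul _ c3
      apply Continuous.add
      · apply Continuous.add
        · exact (c3.mul (c1.sub continuous_const)).mul cu
        · exact (c3.mul (c2.sub continuous_const)).mul cv
      · exact (((continuous_const.mul c1).add (continuous_const.mul c2)).sub
          ((c1.pow 2).add (c2.pow 2))).mul cr
    · exact (continuous_const.sub ((continuous_const.mul c1).add (continuous_const.mul c2))).pow 2
    · exact fun t => pow_ne_zero 2 (one_sub_s_pos hab (hmem t)).ne'
  have hode : ∀ t ∈ Set.Icc s₁ s₂,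
      A*(deriv γ t).1 + B*(deriv γ t).2.1
      = ((((γ t).2.2*((γ t).1 - a))*(deriv γ t).1 + ((γ t).2.2*((γ t).2.1 - b))*(deriv γ t).2.1
          + ((a*(γ t).1 + b*(γ t).2.1) - ((γ t).1^2 + (γ t).2.1^2))*(deriv γ t).2.2)
        * (γ t).2.2 / (1 - (a*(γ t).1 + b*(γ t).2.1))^2)
        * (A*(γ t).1 + B*(γ t).2.1 - C) := by
    intro t ht
    have hsq := calib_eq_of_abs hab (hmem t) (hpt t ht)
    have hkey := eq_case_ode hAB hρ ha hb (hmem t).1 (by linarith [horth t]) hsq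
    have hsp := one_sub_s_pos hab (hmem t)
    have hne2 : (1 - (a*(γ t).1 + b*(γ t).2.1))^2 ≠ 0 := pow_ne_zero 2 hsp.ne'
    rw [div_mul_eq_mul_div (b := (1 - (a * (γ t).1 + b * (γ t).2.1)) ^ 2), eq_div_iff hne2]
    linear_combination hkey
  have hvan := ode_vanish hf' hfc hμc hode (by rw [← hCp]; ring)
  refine ⟨A, B, C, hAB, ε/3, by linarith, fun t ht => ?_⟩
  have := hvan t ht
  linarith [this]


lemma horiz_ne {γ : ℝ → ℝ × ℝ × ℝ} (hγ : ContDiff ℝ 1 γ) (hmem : ∀ t, γ t ∈ upperHemi)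
    (hreg : ∀ t, deriv γ t ≠ 0) (t : ℝ) :
    ¬((deriv γ t).1 = 0 ∧ (deriv γ t).2.1 = 0) := by
  rintro ⟨h1, h2⟩
  have horth := orth_interior hγ isOpen_univ (fun u _ => (hmem u).1) (Set.mem_univ t)
  rw [h1, h2] at horth
  have hz := (hmem t).2
  have h3 : (deriv γ t).2.2 = 0 := by
    have : (γ t).2.2 * (deriv γ t).2.2 = 0 := by linarith
    rcases mul_eq_zero.mp this with h | h
    · exact absurd h hz.ne'
    · exact h
  apply hreg t
  rw [show (0:ℝ×ℝ×ℝ) = ((0:ℝ),((0:ℝ),(0:ℝ))) from rfl, Prod.ext_iff]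
  exact ⟨h1, by rw [Prod.ext_iff]; exact ⟨h2, h3⟩⟩

lemma plane_deriv_zero_local {γ : ℝ → ℝ × ℝ × ℝ} (hγ : ContDiff ℝ 1 γ) {A B C : ℝ} {t : ℝ}
    (h : ∀ᶠ s in nhds t, A*(γ s).1 + B*(γ s).2.1 = C) :
    A*(deriv γ t).1 + B*(deriv γ t).2.1 = 0 := by
  have hd := (hγ.differentiable one_ne_zero t).hasDerivAt
  have h1 : HasDerivAt (fun s => A * (γ s).1 + B * (γ s).2.1)
      (A * (deriv γ t).1 + B * (deriv γ t).2.1) t :=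
    ((hasDerivAt_c1 hd).const_mul A).add ((hasDerivAt_c2 hd).const_mul B)
  have h0 : HasDerivAt (fun s => A * (γ s).1 + B * (γ s).2.1) 0 t :=
    (hasDerivAt_const t C).congr_of_eventuallyEq h
  exact h1.unique h0

lemma global_plane {γ : ℝ → ℝ × ℝ × ℝ} (hγ : ContDiff ℝ 1 γ) (hmem : ∀ t, γ t ∈ upperHemi)
    (hreg : ∀ t, deriv γ t ≠ 0)
    (hloc : ∀ t0 : ℝ, ∃ A B C : ℝ, A^2 + B^2 = 1 ∧ ∃ δ : ℝ, 0 < δ ∧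
      ∀ t ∈ Set.Icc (t0 - δ) (t0 + δ), A*(γ t).1 + B*(γ t).2.1 = C) :
    ∃ A B C : ℝ, A^2 + B^2 = 1 ∧ ∀ t, A*(γ t).1 + B*(γ t).2.1 = C := by
  obtain ⟨A, B, C, hAB, δ0, hδ0, h0⟩ := hloc 0
  refine ⟨A, B, C, hAB, ?_⟩
  set W := {t : ℝ | ∀ᶠ s in nhds t, A*(γ s).1 + B*(γ s).2.1 = C} with hWd
  have hWopen : IsOpen W := isOpen_setOf_eventually_nhds
  have hW0 : (0:ℝ) ∈ W := by
    have hIcc : Set.Icc (0 - δ0) (0 + δ0) ∈ nhds (0:ℝ) :=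
      Icc_mem_nhds (by linarith) (by linarith)
    exact Filter.eventually_of_mem hIcc h0
  have hWclosed : IsClosed W := by
    apply isClosed_of_closure_subset
    intro t ht
    obtain ⟨A', B', C', hAB', δ, hδ, hpl'⟩ := hloc t
    obtain ⟨t', ht'W, ht'd⟩ := Metric.mem_closure_iff.mp ht δ hδ
    have htb : t - δ < t' ∧ t' < t + δ := by
      rw [Real.dist_eq] at ht'd
      obtain ⟨hl, hr⟩ := abs_lt.mp ht'd
      constructor <;> linarith
    have hev : ∀ᶠ s in nhds t', A*(γ s).1 + B*(γ s).2.1 = C := ht'W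
    have hev' : ∀ᶠ s in nhds t', A'*(γ s).1 + B'*(γ s).2.1 = C' := by
      have hIoo : Set.Ioo (t - δ) (t + δ) ∈ nhds t' := Ioo_mem_nhds htb.1 htb.2
      exact Filter.eventually_of_mem hIoo (fun s hs => hpl' s ⟨hs.1.le, hs.2.le⟩)
    have hAuv := plane_deriv_zero_local hγ hev
    have hA'uv := plane_deriv_zero_local hγ hev'
    have hcross : A*B' - A'*B = 0 := by
      have huv := horiz_ne hγ hmem hreg t'
      have h1 : (A*B' - A'*B)*(deriv γ t').1 = 0 := by
        linear_combination B'*hAuv - B*hA'uv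
      have h2 : (A*B' - A'*B)*(deriv γ t').2.1 = 0 := by
        linear_combination (-A')*hAuv + A*hA'uv
      by_cases hu : (deriv γ t').1 = 0
      · have hv : (deriv γ t').2.1 ≠ 0 := fun hv => huv ⟨hu, hv⟩
        exact (mul_eq_zero.mp h2).resolve_right hv
      · exact (mul_eq_zero.mp h1).resolve_right hu
    set c := A*A' + B*B' with hcd
    have hA'eq : A' = c*A := by rw [hcd]; linear_combination (-B)*hcross + (-A')*hAB
    have hB'eq : B' = c*B := by rw [hcd]; linear_combination A*hcross + (-B')*hAB
    have hc2 : c^2 = 1 := by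
      rw [hA'eq, hB'eq] at hAB'
      linear_combination hAB' - c^2*hAB
    have hc0 : c ≠ 0 := by intro h; rw [h] at hc2; norm_num at hc2
    have hft : A*(γ t').1 + B*(γ t').2.1 = C := hev.self_of_nhds
    have hft' : A'*(γ t').1 + B'*(γ t').2.1 = C' := hev'.self_of_nhds
    rw [hA'eq, hB'eq] at hft'
    have hC'eq : C' = c*C := by linear_combination (-1)*hft' + c*hft
    have hplane : ∀ s ∈ Set.Icc (t - δ) (t + δ), A*(γ s).1 + B*(γ s).2.1 = C := by
      intro s hs
      have h1 := hpl' s hs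
      rw [hA'eq, hB'eq, hC'eq] at h1
      have h2 : c*(A*(γ s).1 + B*(γ s).2.1) = c*C := by linear_combination h1
      exact mul_left_cancel₀ hc0 h2
    exact Filter.eventually_of_mem (Icc_mem_nhds (by linarith) (by linarith)) hplane
  have hWuniv : W = Set.univ := IsClopen.eq_univ ⟨hWclosed, hWopen⟩ ⟨0, hW0⟩
  intro t
  have htW : t ∈ W := hWuniv ▸ Set.mem_univ t
  exact htW.self_of_nhds

end JemAux

/-- The geodesics of the Jemisphere model are precisely the intersections of the
hemisphere with vertical planes `A w₁ + B w₂ = C`, `(A,B) ≠ (0,0)`. -/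
theorem jemisphere_geodesics (γ : ℝ → ℝ × ℝ × ℝ) (hγ : ContDiff ℝ 1 γ)
    (hmem : ∀ t, γ t ∈ upperHemi) (hreg : ∀ t, deriv γ t ≠ 0) :
    IsJemGeodesic γ ↔ ∃ A B C : ℝ, (A, B) ≠ ((0 : ℝ), (0 : ℝ)) ∧
      ∀ t, A * (γ t).1 + B * (γ t).2.1 = C := by
  constructor
  · intro hgeo
    obtain ⟨A, B, C, hAB, hpl⟩ := JemAux.global_plane hγ hmem hreg
      (fun t0 => JemAux.local_plane hγ hmem hreg hgeo t0)
    refine ⟨A, B, C, ?_, hpl⟩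
    intro h
    rw [Prod.ext_iff] at h
    obtain ⟨h1, h2⟩ := h
    simp only at h1 h2
    rw [h1, h2] at hAB
    norm_num at hAB
  · rintro ⟨A, B, C, hne, hpl⟩
    apply JemAux.geodesic_of_plane hγ hmem hreg _ hpl
    rintro ⟨h1, h2⟩
    exact hne (by rw [h1, h2])
end

section
/- On the center-of-mass subspace, the pushforward of the mass metric ds²_E under the Hopf/shape projection satisfies: the shape-space projection of the mass metric is |dw|²/I, i.e. for curves ξ(t) in ℂ²\{0} orthogonal to the S¹-orbits, |ξ̇|² = |ẇ|²/(4I) · 4 = |ẇ|²/I where w(t) is the Hopf image and I = |ξ|². -/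
open Complex

lemma conj_hasDerivAt {f : ℝ → ℂ} {d : ℂ} {t : ℝ} (h : HasDerivAt f d t) :
    HasDerivAt (fun s => (starRingEnd ℂ) (f s)) ((starRingEnd ℂ) d) t := by
  have := Complex.conjCLE.hasFDerivAt.comp_hasDerivAt t h
  exact this

lemma normSq_hasDerivAt {f : ℝ → ℂ} {d : ℂ} {t : ℝ} (h : HasDerivAt f d t) :
    HasDerivAt (fun s => Complex.normSq (f s))
      (((starRingEnd ℂ) d * f t + (starRingEnd ℂ) (f t) * d).re) t := by
  have hmul : HasDerivAt (fun s => (starRingEnd ℂ) (f s) * f s)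
      ((starRingEnd ℂ) d * f t + (starRingEnd ℂ) (f t) * d) t :=
    (conj_hasDerivAt h).mul h
  have h2 := Complex.reCLM.hasFDerivAt.comp_hasDerivAt t hmul
  simp only [Function.comp_def, Complex.reCLM_apply] at h2
  have heq : (fun s => ((starRingEnd ℂ) (f s) * f s).re) = fun s => Complex.normSq (f s) := by
    funext s
    rw [mul_comm, Complex.mul_conj, Complex.ofReal_re]
  rwa [heq] at h2

/-- For a horizontal curve `ξ(t)` in `ℂ² \ {0}` (velocity orthogonal to the
`S¹`-orbits, i.e. `Im(ξ̄₁ξ̇₁ + ξ̄₂ξ̇₂) = 0`), the Hopf image `w(t)` satisfies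
`|ξ̇|² = |ẇ|²/I` with `I = |ξ₁|² + |ξ₂|²`: the mass metric pushes down to
`|dw|²/I` on shape space. -/
theorem mass_metric_pushdown (ξ₁ ξ₂ : ℝ → ℂ) (d₁ d₂ : ℂ) (t : ℝ)
    (h1 : HasDerivAt ξ₁ d₁ t) (h2 : HasDerivAt ξ₂ d₂ t)
    (hI : Complex.normSq (ξ₁ t) + Complex.normSq (ξ₂ t) ≠ 0)
    (hhor : ((starRingEnd ℂ) (ξ₁ t) * d₁ + (starRingEnd ℂ) (ξ₂ t) * d₂).im = 0) :
    Complex.normSq d₁ + Complex.normSq d₂ =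
      ((deriv (fun s => (Complex.normSq (ξ₁ s) - Complex.normSq (ξ₂ s)) / 2) t) ^ 2
        + (deriv (fun s => ((starRingEnd ℂ) (ξ₁ s) * ξ₂ s).re) t) ^ 2
        + (deriv (fun s => ((starRingEnd ℂ) (ξ₁ s) * ξ₂ s).im) t) ^ 2)
      / (Complex.normSq (ξ₁ t) + Complex.normSq (ξ₂ t)) := by
  have hw1 : HasDerivAt (fun s => (Complex.normSq (ξ₁ s) - Complex.normSq (ξ₂ s)) / 2)
      ((((starRingEnd ℂ) d₁ * ξ₁ t + (starRingEnd ℂ) (ξ₁ t) * d₁).re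
        - ((starRingEnd ℂ) d₂ * ξ₂ t + (starRingEnd ℂ) (ξ₂ t) * d₂).re) / 2) t :=
    ((normSq_hasDerivAt h1).sub (normSq_hasDerivAt h2)).div_const 2
  have hp : HasDerivAt (fun s => (starRingEnd ℂ) (ξ₁ s) * ξ₂ s)
      ((starRingEnd ℂ) d₁ * ξ₂ t + (starRingEnd ℂ) (ξ₁ t) * d₂) t :=
    (conj_hasDerivAt h1).mul h2
  have hw2 := Complex.reCLM.hasFDerivAt.comp_hasDerivAt t hp
  have hw3 := Complex.imCLM.hasFDerivAt.comp_hasDerivAt t hp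
  simp only [Function.comp_def, Complex.reCLM_apply] at hw2
  simp only [Function.comp_def, Complex.imCLM_apply] at hw3
  rw [hw1.deriv, hw2.deriv, hw3.deriv]
  rw [eq_div_iff hI]
  simp only [Complex.add_im, Complex.add_re, Complex.mul_re, Complex.mul_im,
    Complex.conj_re, Complex.conj_im, Complex.normSq_apply] at *
  linear_combination (((ξ₁ t).re * d₁.im - (ξ₁ t).im * d₁.re
      + ((ξ₂ t).re * d₂.im - (ξ₂ t).im * d₂.re))) * hhor
end

section
/- In Hopf coordinates the potential pushes down to shape space as U = γμ²I/w₃², where Δ = μ w₃ with μ² = m₁m₂m₃/(m₁+m₂+m₃); consequently the Jacobi–Maupertuis metric 2U ds²_E pushes down to the shape sphere (with ds²_E pushing to |dw|²/I) as the metric γμ²·2·|dw|²/w₃², which is a constant multiple of the Jemisphere metric and hence has the same unparametrized geodesics. -/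
open Pointwise


/-- Length of a curve segment for the scaled Jemisphere metric `c|dw|²/w₃²`. -/
noncomputable def jemLengthC (c : ℝ) (γ : ℝ → ℝ × ℝ × ℝ) (a b : ℝ) : ℝ :=
  ∫ t in a..b, Real.sqrt c * speed γ t / (γ t).2.2

/-- Distance for the scaled Jemisphere metric. -/
noncomputable def jemDistC (c : ℝ) (x y : ℝ × ℝ × ℝ) : ℝ :=
  sInf {L | ∃ γ : ℝ → ℝ × ℝ × ℝ, ContDiff ℝ 1 γ ∧ γ 0 = x ∧ γ 1 = y ∧
    (∀ t ∈ Set.Icc (0 : ℝ) 1, γ t ∈ upperHemi) ∧ L = jemLengthC c γ 0 1}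

/-- Unparametrized geodesic (locally length minimizing curve) for the scaled metric. -/
def IsJemGeodesicC (c : ℝ) (γ : ℝ → ℝ × ℝ × ℝ) : Prop :=
  ∀ t : ℝ, ∃ ε > 0, ∀ s₁ s₂ : ℝ, |s₁ - t| < ε → |s₂ - t| < ε → s₁ ≤ s₂ →
    jemDistC c (γ s₁) (γ s₂) = jemLengthC c γ s₁ s₂

lemma jemLengthC_scale (c : ℝ) (γ : ℝ → ℝ × ℝ × ℝ) (a b : ℝ) :
    jemLengthC c γ a b = Real.sqrt c * jemLengthC 1 γ a b := by
  unfold jemLengthC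
  rw [← intervalIntegral.integral_const_mul]
  simp [Real.sqrt_one, mul_div_assoc]

lemma jemDistC_scale (c : ℝ) (hc : 0 < c) (x y : ℝ × ℝ × ℝ) :
    jemDistC c x y = Real.sqrt c * jemDistC 1 x y := by
  unfold jemDistC
  have hset : {L | ∃ γ : ℝ → ℝ × ℝ × ℝ, ContDiff ℝ 1 γ ∧ γ 0 = x ∧ γ 1 = y ∧
      (∀ t ∈ Set.Icc (0 : ℝ) 1, γ t ∈ upperHemi) ∧ L = jemLengthC c γ 0 1}
      = Real.sqrt c • {L | ∃ γ : ℝ → ℝ × ℝ × ℝ, ContDiff ℝ 1 γ ∧ γ 0 = x ∧ γ 1 = y ∧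
      (∀ t ∈ Set.Icc (0 : ℝ) 1, γ t ∈ upperHemi) ∧ L = jemLengthC 1 γ 0 1} := by
    ext L
    constructor
    · rintro ⟨γ', h1, h2, h3, h4, rfl⟩
      exact ⟨jemLengthC 1 γ' 0 1, ⟨γ', h1, h2, h3, h4, rfl⟩, (jemLengthC_scale c γ' 0 1).symm⟩
    · rintro ⟨L', ⟨γ', h1, h2, h3, h4, rfl⟩, rfl⟩
      exact ⟨γ', h1, h2, h3, h4, (jemLengthC_scale c γ' 0 1).symm⟩
  rw [hset, Real.sInf_smul_of_nonneg (Real.sqrt_nonneg c)]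
  rfl

/-- With `w₃ = μΔ`, `μ² = m₁m₂m₃/(m₁+m₂+m₃)`, the potential pushes down as
`U = γμ²I/w₃²`, and the JM metric `2U ds²_E` pushes down to the shape sphere as
`2U·(|dw|²/I) = 2γμ²·|dw|²/w₃²`, a constant multiple of the Jemisphere metric,
hence with the same unparametrized geodesics. -/
theorem JM_pushes_to_jemisphere (m₁ m₂ m₃ γ : ℝ)
    (hm₁ : 0 < m₁) (hm₂ : 0 < m₂) (hm₃ : 0 < m₃) (hγ : 0 < γ)
    (μ : ℝ) (hμ : μ = Real.sqrt (m₁ * m₂ * m₃ / (m₁ + m₂ + m₃))) :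
    (∀ I Δ w₃ dw2 : ℝ, I ≠ 0 → Δ ≠ 0 → w₃ = μ * Δ →
        2 * (γ * I / Δ ^ 2) * (dw2 / I) = (2 * γ * μ ^ 2) * (dw2 / w₃ ^ 2))
    ∧ ∀ γc : ℝ → ℝ × ℝ × ℝ, ContDiff ℝ 1 γc → (∀ t, γc t ∈ upperHemi) →
        (∀ t, deriv γc t ≠ 0) →
        (IsJemGeodesicC (2 * γ * μ ^ 2) γc ↔ IsJemGeodesicC 1 γc) := by
  have hμ2 : μ ^ 2 = m₁ * m₂ * m₃ / (m₁ + m₂ + m₃) := by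
    rw [hμ, Real.sq_sqrt]
    positivity
  have hμpos : 0 < μ ^ 2 := by rw [hμ2]; positivity
  have hμne : μ ≠ 0 := by intro h; rw [h] at hμpos; simp at hμpos
  constructor
  · intro I Δ w₃ dw2 hI hΔ hw
    subst hw
    field_simp
  · intro γc _ _ _
    have hc : 0 < 2 * γ * μ ^ 2 := by positivity
    have hs : 0 < Real.sqrt (2 * γ * μ ^ 2) := Real.sqrt_pos.mpr hc
    constructor <;> intro h t <;> obtain ⟨ε, hε, H⟩ := h t <;> refine ⟨ε, hε, fun s₁ s₂ h1 h2 h3 => ?_⟩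
    · have := H s₁ s₂ h1 h2 h3
      rw [jemDistC_scale _ hc, jemLengthC_scale] at this
      exact mul_left_cancel₀ (ne_of_gt hs) this
    · rw [jemDistC_scale _ hc, jemLengthC_scale, H s₁ s₂ h1 h2 h3]
end
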